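/- Fix n ∈ ℕ, real numbers b ∈ (0,1), λ_ℓ > 0, λ_h > 0, a sequence of actions a_0,…,a_n with each a_t ∈ {ℓ,h}, and a sequence of decisions d_0,…,d_n with each d_t ∈ {0,1}. For parameters (c_ℓ, c_h, x_0) ∈ ℝ³, define the trajectory x_0(c_ℓ,c_h,x_0) = x_0 and x_t(c_ℓ,c_h,x_0) = b^t·x_0 + Σ_{k<t: a_k=ℓ, d_k=1} b^{t−1−k}·c_ℓ + Σ_{k<t: a_k=h, d_k=1} b^{t−1−k}·c_h for t ≥ 1, and define the log-likelihood objective F(c_ℓ,c_h,x_0) = Σ_{t=0}^{n} [ d_t·(−λ_{a_t}·x_t(c_ℓ,c_h,x_0)) + (1−d_t)·log(1 − exp(−λ_{a_t}·x_t(c_ℓ,c_h,x_0))) ]. Then F is concave on the convex set D = {(c_ℓ,c_h,x_0) : c_ℓ ≥ 0, c_h ≥ 0, x_0 ≥ 0, and x_t(c_ℓ,c_h,x_0) > 0 for every t ≤ n with d_t = 0}. -/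
import Mathlib


/-- The engagement-state trajectory induced by parameters `p = (c_ℓ, c_h, x_0)`,
for fixed recovery parameter `b`, actions `a` (`false` = low-burden ℓ, `true` =
high-burden h) and adherence decisions `d`:
`x_t = b^t * x_0 + ∑_{k<t, a_k=ℓ, d_k=1} b^(t-1-k) * c_ℓ
              + ∑_{k<t, a_k=h, d_k=1} b^(t-1-k) * c_h`
(at `t = 0` this reduces to `x_0`). -/
noncomputable def mleTraj (b : ℝ) (a : ℕ → Bool) (d : ℕ → ℝ)
    (p : ℝ × ℝ × ℝ) (t : ℕ) : ℝ :=
  b ^ t * p.2.2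
    + ∑ k ∈ (Finset.range t).filter (fun k => a k = false ∧ d k = 1),
        b ^ (t - 1 - k) * p.1
    + ∑ k ∈ (Finset.range t).filter (fun k => a k = true ∧ d k = 1),
        b ^ (t - 1 - k) * p.2.1

/-- The adherence parameter `λ_{a_t}` associated with an action. -/
noncomputable def lamOf (lamL lamH : ℝ) (act : Bool) : ℝ :=
  if act then lamH else lamL

/-- The log-likelihood objective of the MLE subproblem, as a function of
`p = (c_ℓ, c_h, x_0)`. -/
noncomputable def mleObjective (n : ℕ) (b lamL lamH : ℝ) (a : ℕ → Bool) (d : ℕ → ℝ)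
    (p : ℝ × ℝ × ℝ) : ℝ :=
  ∑ t ∈ Finset.range (n + 1),
    (d t * (-(lamOf lamL lamH (a t) * mleTraj b a d p t))
      + (1 - d t) * Real.log (1 - Real.exp (-(lamOf lamL lamH (a t) * mleTraj b a d p t))))

/-- The trajectory as a linear map in the parameters `(c_ℓ, c_h, x_0)`. -/
noncomputable def trajLin (b : ℝ) (a : ℕ → Bool) (d : ℕ → ℝ) (t : ℕ) :
    (ℝ × ℝ × ℝ) →ₗ[ℝ] ℝ :=
  (b ^ t) • (LinearMap.snd ℝ ℝ ℝ).comp (LinearMap.snd ℝ ℝ (ℝ × ℝ))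
    + (∑ k ∈ (Finset.range t).filter (fun k => a k = false ∧ d k = 1), b ^ (t - 1 - k))
        • LinearMap.fst ℝ ℝ (ℝ × ℝ)
    + (∑ k ∈ (Finset.range t).filter (fun k => a k = true ∧ d k = 1), b ^ (t - 1 - k))
        • (LinearMap.fst ℝ ℝ ℝ).comp (LinearMap.snd ℝ ℝ (ℝ × ℝ))

lemma trajLin_apply (b : ℝ) (a : ℕ → Bool) (d : ℕ → ℝ) (t : ℕ) (p : ℝ × ℝ × ℝ) :
    trajLin b a d t p = mleTraj b a d p t := by
  simp [trajLin, mleTraj, Finset.sum_mul]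

/-- `x ↦ log (1 - exp (-x))` is concave on `(0, ∞)`. -/
lemma concaveOn_log_one_sub_exp_neg :
    ConcaveOn ℝ (Set.Ioi (0:ℝ)) (fun x => Real.log (1 - Real.exp (-x))) := by
  have key : ∀ x ∈ Set.Ioi (0:ℝ), HasDerivAt (fun x => Real.log (1 - Real.exp (-x)))
      (Real.exp (-x) / (1 - Real.exp (-x))) x := by
    intro x hx
    have h1 : Real.exp (-x) < 1 := Real.exp_lt_one_iff.2 (by linarith [hx.out])
    have h2 : (1:ℝ) - Real.exp (-x) ≠ 0 := by linarith
    have hinner : HasDerivAt (fun x : ℝ => 1 - Real.exp (-x)) (Real.exp (-x)) x := by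
      have := ((Real.hasDerivAt_exp (-x)).comp x (hasDerivAt_neg x)).const_sub 1
      simpa using this
    simpa using hinner.log h2
  have hderiv : ∀ x ∈ Set.Ioi (0:ℝ),
      deriv (fun x => Real.log (1 - Real.exp (-x))) x
        = Real.exp (-x) / (1 - Real.exp (-x)) := fun x hx => (key x hx).deriv
  refine AntitoneOn.concaveOn_of_deriv (convex_Ioi 0) ?_ ?_ ?_
  · intro x hx
    exact ((key x hx).continuousAt).continuousWithinAt
  · rw [interior_Ioi]
    intro x hx
    exact ((key x hx).differentiableAt).differentiableWithinAt
  · rw [interior_Ioi]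
    intro x hx y hy hxy
    rw [hderiv x hx, hderiv y hy]
    have hx1 : Real.exp (-x) < 1 := Real.exp_lt_one_iff.2 (by linarith [hx.out])
    have hy1 : Real.exp (-y) < 1 := Real.exp_lt_one_iff.2 (by linarith [hy.out])
    have hle : Real.exp (-y) ≤ Real.exp (-x) := Real.exp_le_exp.2 (by linarith)
    have hxpos : (0:ℝ) < Real.exp (-x) := Real.exp_pos _
    have hypos : (0:ℝ) < Real.exp (-y) := Real.exp_pos _
    rw [div_le_div_iff₀ (by linarith) (by linarith)]
    nlinarith

/-- Concavity of a single term of the log-likelihood. -/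
lemma term_concave {lam : ℝ} (hlam : 0 < lam) (L : (ℝ × ℝ × ℝ) →ₗ[ℝ] ℝ)
    {dt : ℝ} (hdt : dt = 0 ∨ dt = 1) {s : Set (ℝ × ℝ × ℝ)} (hs : Convex ℝ s)
    (hpos : dt = 0 → ∀ p ∈ s, 0 < L p) :
    ConcaveOn ℝ s (fun p =>
      dt * (-(lam * L p)) + (1 - dt) * Real.log (1 - Real.exp (-(lam * L p)))) := by
  rcases hdt with h0 | h1
  · subst h0
    simp only [zero_mul, sub_zero, one_mul, zero_add]
    have hsub : s ⊆ ⇑(lam • L).toAffineMap ⁻¹' Set.Ioi 0 := by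
      intro p hp
      simp only [Set.mem_preimage, LinearMap.coe_toAffineMap, LinearMap.smul_apply,
        smul_eq_mul, Set.mem_Ioi]
      exact mul_pos hlam (hpos rfl p hp)
    have := (concaveOn_log_one_sub_exp_neg.comp_affineMap (lam • L).toAffineMap).subset hsub hs
    have heq : ((fun x => Real.log (1 - Real.exp (-x))) ∘ ⇑(lam • L).toAffineMap)
        = fun p => Real.log (1 - Real.exp (-(lam * L p))) := by
      funext p
      simp [Function.comp]
    rwa [heq] at this
  · subst h1
    simp only [one_mul, sub_self, zero_mul, add_zero]
    refine ⟨hs, fun x hx y hy u v hu hv huv => ?_⟩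
    simp only [smul_eq_mul, map_add, map_smul, smul_eq_mul]
    apply le_of_eq
    ring

lemma concaveOn_finset_sum {ι : Type*} (t : Finset ι) {s : Set (ℝ × ℝ × ℝ)}
    (hs : Convex ℝ s) (f : ι → (ℝ × ℝ × ℝ) → ℝ)
    (h : ∀ i ∈ t, ConcaveOn ℝ s (f i)) :
    ConcaveOn ℝ s (fun p => ∑ i ∈ t, f i p) := by
  classical
  induction t using Finset.cons_induction with
  | empty => simpa using concaveOn_const (0:ℝ) hs
  | cons i t hit ih =>
    simp only [Finset.sum_cons]
    exact (h i (Finset.mem_cons_self _ _)).add (ih fun j hj => h j (Finset.mem_cons_of_mem hj))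

/-- Proposition 1: for fixed `(λ_ℓ, λ_h, b)` the maximum-likelihood subproblem is a
concave maximization problem, i.e. the log-likelihood objective `F` is concave on the
convex set `D` of parameters `(c_ℓ, c_h, x_0)` with nonnegative entries along whose
induced trajectory every non-adherence time `t` (with `d_t = 0`) has `x_t > 0`. -/
theorem mleObjective_concaveOn (n : ℕ) (b lamL lamH : ℝ)
    (hb : b ∈ Set.Ioo (0 : ℝ) 1) (hlamL : 0 < lamL) (hlamH : 0 < lamH)
    (a : ℕ → Bool) (d : ℕ → ℝ) (hd : ∀ t, d t = 0 ∨ d t = 1) :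
    ConcaveOn ℝ
      {p : ℝ × ℝ × ℝ | 0 ≤ p.1 ∧ 0 ≤ p.2.1 ∧ 0 ≤ p.2.2 ∧
        ∀ t ≤ n, d t = 0 → 0 < mleTraj b a d p t}
      (mleObjective n b lamL lamH a d) := by
  set D : Set (ℝ × ℝ × ℝ) :=
    {p : ℝ × ℝ × ℝ | 0 ≤ p.1 ∧ 0 ≤ p.2.1 ∧ 0 ≤ p.2.2 ∧
      ∀ t ≤ n, d t = 0 → 0 < mleTraj b a d p t} with hD
  have hDconv : Convex ℝ D := by
    intro x hx y hy u v hu hv huv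
    obtain ⟨hx1, hx2, hx3, hx4⟩ := hx
    obtain ⟨hy1, hy2, hy3, hy4⟩ := hy
    refine ⟨?_, ?_, ?_, ?_⟩
    · have : (u • x + v • y).1 = u * x.1 + v * y.1 := rfl
      rw [this]; positivity
    · have : (u • x + v • y).2.1 = u * x.2.1 + v * y.2.1 := rfl
      rw [this]; positivity
    · have : (u • x + v • y).2.2 = u * x.2.2 + v * y.2.2 := rfl
      rw [this]; positivity
    · intro t ht hdt
      have hx' := hx4 t ht hdt
      have hy' := hy4 t ht hdt
      rw [← trajLin_apply] at hx' hy' ⊢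
      rw [map_add, map_smul, map_smul, smul_eq_mul, smul_eq_mul]
      rcases eq_or_lt_of_le hu with hu0 | hu0
      · have hv1 : v = 1 := by linarith
        simp [← hu0, hv1, hy']
      · nlinarith
  have hlam : ∀ t, 0 < lamOf lamL lamH (a t) := by
    intro t; unfold lamOf; split <;> assumption
  have hterm : ∀ t ∈ Finset.range (n + 1), ConcaveOn ℝ D (fun p =>
      d t * (-(lamOf lamL lamH (a t) * trajLin b a d t p))
        + (1 - d t) * Real.log (1 - Real.exp (-(lamOf lamL lamH (a t) * trajLin b a d t p)))) := by
    intro t htmem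
    refine term_concave (hlam t) (trajLin b a d t) (hd t) hDconv ?_
    intro hdt p hp
    rw [trajLin_apply]
    exact hp.2.2.2 t (Nat.lt_succ_iff.mp (Finset.mem_range.mp htmem)) hdt
  have hobj : mleObjective n b lamL lamH a d = fun p => ∑ t ∈ Finset.range (n + 1),
      (d t * (-(lamOf lamL lamH (a t) * trajLin b a d t p))
        + (1 - d t) * Real.log (1 - Real.exp (-(lamOf lamL lamH (a t) * trajLin b a d t p)))) := by
    funext p
    simp [mleObjective, trajLin_apply]
  rw [hobj]
  exact concaveOn_finset_sum _ hDconv _ hterm
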